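/- Let A be a bounded self-adjoint operator on a separable infinite-dimensional Hilbert space H with inf_{‖x‖=1} ⟨Ax, x⟩ > 0, whose eigenvectors span a dense subspace of H (i.e. σ(A) = σ_pp(A) ⊂ (0, ∞)). Suppose the set of eigenvalues of A has a minimal element r whose eigenspace H_r = Ker(A − r) is finite-dimensional. Let T : H → H be a linear operator which maps the ellipsoid E = {x ∈ H : ⟨x, Ax⟩ ≤ 1} bijectively onto itself and whose restriction to E is non-expansive. Then T(H_r) = H_r, T(H_r ∩ E) = H_r ∩ E, and the restriction of T to H_r is a bijective isometry. -/

import Mathlib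

/-!
On the dense span of the eigenvectors, and hence everywhere, `re ⟪x, A x⟫ ≥ r ‖x‖²`, with
equality exactly on `H_r` (as `A - r` is a positive operator). So `E` lies in the ball of radius
`r^(-1/2)` and meets its boundary sphere exactly in `H_r`. Being linear and non-expansive on the
absorbing set `E ∋ 0`, `T` is a contraction, so a preimage in `E` of a point of `H_r` on that
sphere lies on the sphere too, hence in `H_r`, and has the same norm. Thus `H_r ⊆ T(H_r)`, and
finite dimensionality upgrades this to `T(H_r) = H_r` with `T` injective, hence isometric, there.
-/

open Module.End RCLike
open scoped InnerProductSpace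

theorem LinearMap.norm_apply_le_of_absorbent {𝕜 E F : Type*} [NontriviallyNormedField 𝕜]
    [SeminormedAddCommGroup E] [NormedSpace 𝕜 E] [SeminormedAddCommGroup F] [NormedSpace 𝕜 F]
    (T : E →ₗ[𝕜] F) {s : Set E} (hs : Absorbent 𝕜 s) (hT : ∀ x ∈ s, ‖T x‖ ≤ ‖x‖) (x : E) :
    ‖T x‖ ≤ ‖x‖ := by
  obtain ⟨c, hcx, hc⟩ :=
    ((hs.eventually_nhdsNE_zero x).and self_mem_nhdsWithin).exists
  have := hT _ hcx
  rw [map_smul, norm_smul, norm_smul] at this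
  exact le_of_mul_le_mul_left this (norm_pos_iff.mpr hc)

theorem LinearMap.bijOn_of_le_map {K V : Type*} [DivisionRing K] [AddCommGroup V] [Module K V]
    {U : Submodule K V} [FiniteDimensional K U] {T : V →ₗ[K] V} (h : U ≤ U.map T) :
    Set.BijOn T U U := by
  have hmap : U.map T = U :=
    (Submodule.eq_of_le_of_finrank_le h (Submodule.finrank_map_le T U)).symm
  have hmapsTo : ∀ x ∈ U, T x ∈ U := fun x hx => hmap ▸ Submodule.mem_map_of_mem hx
  have hsurj : Function.Surjective (T.restrict hmapsTo) := by
    rintro ⟨y, hy⟩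
    obtain ⟨x, hx, rfl⟩ := h hy
    exact ⟨⟨x, hx⟩, rfl⟩
  refine ⟨hmapsTo, fun x hx x' hx' hxx' => ?_, fun y hy => h hy⟩
  have : T.restrict hmapsTo ⟨x, hx⟩ = T.restrict hmapsTo ⟨x', hx'⟩ := Subtype.ext hxx'
  exact congrArg Subtype.val (LinearMap.injective_iff_surjective.mpr hsurj this)

section

variable {𝕜 E : Type*} [RCLike 𝕜] [NormedAddCommGroup E] [InnerProductSpace 𝕜 E]

theorem LinearMap.IsPositive.apply_eq_zero_of_re_inner_eq_zero {B : E →ₗ[𝕜] E}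
    (hB : B.IsPositive) {x : E} (hx : re ⟪B x, x⟫_𝕜 = 0) : B x = 0 := by
  let c : PreInnerProductSpace.Core 𝕜 E :=
    { inner := fun x y => ⟪B x, y⟫_𝕜
      conj_inner_symm := fun x y => by
        simp only [inner_conj_symm, hB.isSymmetric x y]
      re_inner_nonneg := hB.re_inner_nonneg_left
      add_left := fun x y z => by simp only [map_add, inner_add_left]
      smul_left := fun x y a => by simp only [map_smul, inner_smul_left] }
  -- Cauchy–Schwarz for the semi-inner product `⟪B ·, ·⟫` applied to `x` and `B x`
  have hcs := @InnerProductSpace.Core.inner_mul_inner_self_le 𝕜 E _ _ _ c x (B x)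
  change ‖⟪B x, B x⟫_𝕜‖ * ‖⟪B (B x), x⟫_𝕜‖ ≤ re ⟪B x, x⟫_𝕜 * re ⟪B (B x), B x⟫_𝕜 at hcs
  rw [hx, zero_mul, hB.isSymmetric (B x) x, inner_self_eq_norm_sq_to_K] at hcs
  have : ‖B x‖ ^ 4 ≤ 0 := by simpa [← pow_add] using hcs
  exact norm_eq_zero.mp (pow_eq_zero_iff four_ne_zero |>.mp (this.antisymm (by positivity)))


theorem re_inner_apply_self_of_mem_eigenspace {A : E →ₗ[𝕜] E} {r : ℝ} {x : E}
    (hx : x ∈ eigenspace A (r : 𝕜)) : re ⟪x, A x⟫_𝕜 = r * ‖x‖ ^ 2 := by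
  rw [mem_eigenspace_iff.mp hx, inner_smul_right, re_ofReal_mul, inner_self_eq_norm_sq]

theorem LinearMap.IsSymmetric.mul_norm_sq_le_re_inner_of_mem_iSup_eigenspace
    {A : E →ₗ[𝕜] E} (hA : A.IsSymmetric) {r : ℝ} (hr : ∀ μ : ℝ, HasEigenvalue A μ → r ≤ μ)
    {x : E} (hx : x ∈ ⨆ μ, eigenspace A μ) : r * ‖x‖ ^ 2 ≤ re ⟪x, A x⟫_𝕜 := by
  classical
  obtain ⟨f, hf, rfl⟩ := (Submodule.mem_iSup_iff_exists_finsupp _ x).mp hx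
  let v : ∀ μ, eigenspace A μ := fun μ => ⟨f μ, hf μ⟩
  let Av : ∀ μ, eigenspace A μ := fun μ => μ • v μ
  have hsum : f.sum (fun _ y => y) = ∑ μ ∈ f.support, (eigenspace A μ).subtypeₗᵢ (v μ) := rfl
  have hAsum : A (f.sum fun _ y => y) = ∑ μ ∈ f.support, (eigenspace A μ).subtypeₗᵢ (Av μ) := by
    rw [hsum, map_sum]
    exact Finset.sum_congr rfl fun μ _ => mem_eigenspace_iff.mp (hf μ)
  have hterm (μ : 𝕜) : r * ‖f μ‖ ^ 2 ≤ re ⟪f μ, μ • f μ⟫_𝕜 := by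
    rw [inner_smul_right, inner_self_eq_norm_sq_to_K, ← ofReal_pow, re_mul_ofReal]
    rcases eq_or_ne (f μ) 0 with h | h
    · simp [h]
    have hμ : HasEigenvalue A μ := hasEigenvalue_of_hasEigenvector ⟨hf μ, h⟩
    have hμ_real : ((re μ : ℝ) : 𝕜) = μ := conj_eq_iff_re.mp (hA.conj_eigenvalue_eq_self hμ)
    exact mul_le_mul_of_nonneg_right (hr _ (by rwa [hμ_real])) (sq_nonneg _)
  have horth := hA.orthogonalFamily_eigenspaces
  calc r * ‖f.sum fun _ y => y‖ ^ 2
      = ∑ μ ∈ f.support, r * ‖f μ‖ ^ 2 := by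
        rw [← Finset.mul_sum, ← @inner_self_eq_norm_sq 𝕜, hsum, horth.inner_sum v v, map_sum]
        simp_rw [inner_self_eq_norm_sq]; rfl
    _ ≤ ∑ μ ∈ f.support, re ⟪f μ, μ • f μ⟫_𝕜 := Finset.sum_le_sum fun μ _ => hterm μ
    _ = re ⟪f.sum fun _ y => y, A (f.sum fun _ y => y)⟫_𝕜 := by
        rw [hAsum, hsum, horth.inner_sum v Av, map_sum]; rfl

theorem ContinuousLinearMap.mul_norm_sq_le_re_inner_apply_self (A : E →L[𝕜] E)
    (hA : (A : E →ₗ[𝕜] E).IsSymmetric)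
    (hdense : (⨆ μ, eigenspace (A : E →ₗ[𝕜] E) μ).topologicalClosure = ⊤) {r : ℝ}
    (hr : ∀ μ : ℝ, HasEigenvalue (A : E →ₗ[𝕜] E) μ → r ≤ μ) (x : E) :
    r * ‖x‖ ^ 2 ≤ re ⟪x, A x⟫_𝕜 := by
  have hclosed : IsClosed {x : E | r * ‖x‖ ^ 2 ≤ re ⟪x, A x⟫_𝕜} :=
    isClosed_le (by fun_prop) (by fun_prop)
  have := closure_minimal
    (fun y hy => hA.mul_norm_sq_le_re_inner_of_mem_iSup_eigenspace hr hy) hclosed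
  rw [← Submodule.topologicalClosure_coe, hdense] at this
  exact this trivial

def ellipsoid (A : E →ₗ[𝕜] E) : Set E := {x | re ⟪x, A x⟫_𝕜 ≤ 1}

theorem absorbent_ellipsoid (A : E →L[𝕜] E) : Absorbent 𝕜 (ellipsoid (A : E →ₗ[𝕜] E)) :=
  absorbent_nhds_zero <| (show Continuous fun x => re ⟪x, A x⟫_𝕜 by fun_prop).continuousAt
    |>.preimage_mem_nhds (Iic_mem_nhds (by simp))

theorem le_of_hasEigenvalue_of_forall_norm_eq_one {A : E →ₗ[𝕜] E} {c μ : ℝ}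
    (hc : ∀ x, ‖x‖ = 1 → c ≤ re ⟪A x, x⟫_𝕜) (hμ : HasEigenvalue A μ) : c ≤ μ := by
  obtain ⟨v, hv, hv0⟩ := hμ.exists_hasEigenvector
  have hu : (‖v‖⁻¹ : 𝕜) • v ∈ eigenspace A μ := Submodule.smul_mem _ _ hv
  have hunit := norm_smul_inv_norm (𝕜 := 𝕜) hv0
  have := hc _ hunit
  rwa [inner_re_symm, re_inner_apply_self_of_mem_eigenspace hu, hunit, one_pow, mul_one] at this

theorem LinearMap.IsSymmetric.mem_eigenspace_of_re_inner_apply_self_eq {A : E →ₗ[𝕜] E}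
    (hA : A.IsSymmetric) {r : ℝ} (hlow : ∀ x, r * ‖x‖ ^ 2 ≤ re ⟪x, A x⟫_𝕜) {x : E}
    (hx : re ⟪x, A x⟫_𝕜 = r * ‖x‖ ^ 2) : x ∈ eigenspace A (r : 𝕜) := by
  have hre (y : E) : re ⟪(A - (r : 𝕜) • 1) y, y⟫_𝕜 = re ⟪y, A y⟫_𝕜 - r * ‖y‖ ^ 2 := by
    rw [LinearMap.sub_apply, inner_sub_left, map_sub, inner_re_symm, LinearMap.smul_apply,
      Module.End.one_apply, inner_smul_left, conj_ofReal, re_ofReal_mul, inner_self_eq_norm_sq]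
  have hpos : (A - (r : 𝕜) • 1).IsPositive :=
    ⟨hA.sub (LinearMap.IsSymmetric.one.smul (conj_ofReal r)),
      fun y => by rw [hre]; linarith [hlow y]⟩
  have := hpos.apply_eq_zero_of_re_inner_eq_zero (by rw [hre, hx, sub_self])
  rw [LinearMap.sub_apply, sub_eq_zero] at this
  exact mem_eigenspace_iff.mpr this

section Preimage

variable {A T : E →ₗ[𝕜] E} {r : ℝ}

theorem exists_preimage_mem_eigenspace_of_re_inner_eq_one (hA : A.IsSymmetric)
    (hlow : ∀ x, r * ‖x‖ ^ 2 ≤ re ⟪x, A x⟫_𝕜) (hsurj : Set.SurjOn T (ellipsoid A) (ellipsoid A))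
    (hT : ∀ x, ‖T x‖ ≤ ‖x‖) {y : E} (hy : y ∈ eigenspace A (r : 𝕜))
    (hy1 : re ⟪y, A y⟫_𝕜 = 1) : ∃ x ∈ eigenspace A (r : 𝕜), ‖x‖ = ‖y‖ ∧ T x = y := by
  obtain ⟨x, hxE, rfl⟩ := hsurj (show y ∈ ellipsoid A from hy1.le)
  rw [re_inner_apply_self_of_mem_eigenspace hy] at hy1
  have hr : 0 < r := pos_of_mul_pos_left (hy1 ▸ one_pos) (sq_nonneg _)
  have hTx : r * ‖T x‖ ^ 2 ≤ r * ‖x‖ ^ 2 := by gcongr; exact hT x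
  -- `r * ‖x‖ ^ 2 ≤ re ⟪x, A x⟫ ≤ 1 = r * ‖T x‖ ^ 2 ≤ r * ‖x‖ ^ 2`, so all are equal
  have hxq : re ⟪x, A x⟫_𝕜 = r * ‖x‖ ^ 2 := by linarith [hlow x, show re ⟪x, A x⟫_𝕜 ≤ 1 from hxE]
  refine ⟨x, hA.mem_eigenspace_of_re_inner_apply_self_eq hlow hxq, ?_, rfl⟩
  have : ‖x‖ ^ 2 = ‖T x‖ ^ 2 := by nlinarith [hlow x, show re ⟪x, A x⟫_𝕜 ≤ 1 from hxE]
  exact (pow_left_inj₀ (norm_nonneg _) (norm_nonneg _) two_ne_zero).mp this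

theorem exists_preimage_mem_eigenspace (hA : A.IsSymmetric) (hr : 0 < r)
    (hlow : ∀ x, r * ‖x‖ ^ 2 ≤ re ⟪x, A x⟫_𝕜) (hsurj : Set.SurjOn T (ellipsoid A) (ellipsoid A))
    (hT : ∀ x, ‖T x‖ ≤ ‖x‖) {y : E} (hy : y ∈ eigenspace A (r : 𝕜)) :
    ∃ x ∈ eigenspace A (r : 𝕜), ‖x‖ = ‖y‖ ∧ T x = y := by
  rcases eq_or_ne y 0 with rfl | hy0
  · exact ⟨0, Submodule.zero_mem _, rfl, map_zero T⟩
  set s : ℝ := √r * ‖y‖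
  have hs : 0 < s := by positivity
  have hsy : ((s⁻¹ : ℝ) : 𝕜) • y ∈ eigenspace A (r : 𝕜) := Submodule.smul_mem _ _ hy
  have hsy1 : re ⟪((s⁻¹ : ℝ) : 𝕜) • y, A (((s⁻¹ : ℝ) : 𝕜) • y)⟫_𝕜 = 1 := by
    rw [re_inner_apply_self_of_mem_eigenspace hsy, norm_smul, norm_ofReal,
      abs_of_pos (inv_pos.mpr hs), mul_pow, inv_pow, mul_pow, Real.sq_sqrt hr.le]
    field_simp
  obtain ⟨x, hx, hxn, hTx⟩ :=
    exists_preimage_mem_eigenspace_of_re_inner_eq_one hA hlow hsurj hT hsy hsy1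
  refine ⟨(s : 𝕜) • x, Submodule.smul_mem _ _ hx, ?_, ?_⟩
  · rw [norm_smul, hxn, norm_smul, ← mul_assoc, norm_ofReal, norm_ofReal, abs_of_pos hs,
      abs_of_pos (inv_pos.mpr hs), mul_inv_cancel₀ hs.ne', one_mul]
  · rw [map_smul, hTx, smul_smul, ← ofReal_mul, mul_inv_cancel₀ hs.ne', ofReal_one, one_smul]

end Preimage

theorem image_inter_ellipsoid_eq_of_bijOn {A T : E →ₗ[𝕜] E} {r : ℝ}
    (hbij : Set.BijOn T (eigenspace A (r : 𝕜)) (eigenspace A (r : 𝕜)))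
    (hiso : ∀ x ∈ eigenspace A (r : 𝕜), ‖T x‖ = ‖x‖)
    (hE : Set.MapsTo T (ellipsoid A) (ellipsoid A)) :
    T '' ((eigenspace A (r : 𝕜) : Set E) ∩ ellipsoid A)
      = (eigenspace A (r : 𝕜) : Set E) ∩ ellipsoid A := by
  refine (Set.BijOn.mk (hbij.mapsTo.inter_inter hE) (hbij.injOn.mono Set.inter_subset_left)
    fun y ⟨hyK, hyE⟩ => ?_).image_eq
  obtain ⟨x, hxK, rfl⟩ := hbij.surjOn hyK
  refine ⟨x, ⟨hxK, ?_⟩, rfl⟩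
  have hq : re ⟪x, A x⟫_𝕜 = re ⟪T x, A (T x)⟫_𝕜 := by
    rw [re_inner_apply_self_of_mem_eigenspace hxK, re_inner_apply_self_of_mem_eigenspace hyK,
      hiso x hxK]
  exact hq.trans_le hyE

end

theorem min_eigenspace_invariant_general
    {𝕜 H : Type*} [RCLike 𝕜] [NormedAddCommGroup H] [InnerProductSpace 𝕜 H]
    [CompleteSpace H]
    (A : H →L[𝕜] H) (hA : IsSelfAdjoint A)
    (hpos : ∃ c : ℝ, 0 < c ∧ ∀ x : H, ‖x‖ = 1 → c ≤ RCLike.re (inner 𝕜 (A x) x : 𝕜))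
    (hdense : (⨆ μ : 𝕜, Module.End.eigenspace (A : H →ₗ[𝕜] H) μ).topologicalClosure = ⊤)
    (r : ℝ)
    (hr : Module.End.HasEigenvalue (A : H →ₗ[𝕜] H) (r : 𝕜))
    (hrmin : ∀ μ : ℝ, Module.End.HasEigenvalue (A : H →ₗ[𝕜] H) (μ : 𝕜) → r ≤ μ)
    (hfd : FiniteDimensional 𝕜 (Module.End.eigenspace (A : H →ₗ[𝕜] H) (r : 𝕜)))
    (T : H →ₗ[𝕜] H)
    (hTbij : Set.BijOn T {x : H | RCLike.re (inner 𝕜 x (A x) : 𝕜) ≤ 1}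
      {x : H | RCLike.re (inner 𝕜 x (A x) : 𝕜) ≤ 1})
    (hTne : ∀ x ∈ {x : H | RCLike.re (inner 𝕜 x (A x) : 𝕜) ≤ 1},
      ∀ y ∈ {x : H | RCLike.re (inner 𝕜 x (A x) : 𝕜) ≤ 1}, ‖T x - T y‖ ≤ ‖x - y‖) :
    T '' (Module.End.eigenspace (A : H →ₗ[𝕜] H) (r : 𝕜) : Set H)
      = (Module.End.eigenspace (A : H →ₗ[𝕜] H) (r : 𝕜) : Set H) ∧
    T '' ((Module.End.eigenspace (A : H →ₗ[𝕜] H) (r : 𝕜) : Set H)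
        ∩ {x : H | RCLike.re (inner 𝕜 x (A x) : 𝕜) ≤ 1})
      = (Module.End.eigenspace (A : H →ₗ[𝕜] H) (r : 𝕜) : Set H)
        ∩ {x : H | RCLike.re (inner 𝕜 x (A x) : 𝕜) ≤ 1} ∧
    Set.BijOn T (Module.End.eigenspace (A : H →ₗ[𝕜] H) (r : 𝕜) : Set H)
      (Module.End.eigenspace (A : H →ₗ[𝕜] H) (r : 𝕜) : Set H) ∧
    ∀ x ∈ (Module.End.eigenspace (A : H →ₗ[𝕜] H) (r : 𝕜) : Set H),
      ∀ y ∈ (Module.End.eigenspace (A : H →ₗ[𝕜] H) (r : 𝕜) : Set H),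
        ‖T x - T y‖ = ‖x - y‖ := by
  obtain ⟨c, hc, hcA⟩ := hpos
  have hr0 : 0 < r := hc.trans_le (le_of_hasEigenvalue_of_forall_norm_eq_one hcA hr)
  have hlow := A.mul_norm_sq_le_re_inner_apply_self hA.isSymmetric hdense hrmin
  have hT : ∀ x, ‖T x‖ ≤ ‖x‖ := T.norm_apply_le_of_absorbent (absorbent_ellipsoid A)
    fun x hx => by simpa using hTne x hx 0 (by simp)
  have hpre (y) (hy : y ∈ eigenspace (A : H →ₗ[𝕜] H) (r : 𝕜)) :=
    exists_preimage_mem_eigenspace hA.isSymmetric hr0 hlow hTbij.surjOn hT hy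
  have hbij : Set.BijOn T _ _ := T.bijOn_of_le_map fun y hy =>
    let ⟨x, hx, _, hxy⟩ := hpre y hy; ⟨x, hx, hxy⟩
  have hiso (x) (hx : x ∈ eigenspace (A : H →ₗ[𝕜] H) (r : 𝕜)) : ‖T x‖ = ‖x‖ := by
    obtain ⟨x', hx', hnorm, hTx'⟩ := hpre (T x) (hbij.mapsTo hx)
    rw [← hnorm, hbij.injOn hx' hx hTx']
  exact ⟨hbij.image_eq, image_inter_ellipsoid_eq_of_bijOn hbij hiso hTbij.mapsTo, hbij,
    fun x hx y hy => by rw [← map_sub, hiso _ (sub_mem hx hy)]⟩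

/-- Let `A` be a bounded self-adjoint operator (positively bounded below
on the sphere) on a separable infinite-dimensional Hilbert space `H`, whose eigenvectors
span a dense subspace of `H`. Suppose the set of eigenvalues has a minimal element `r`
whose eigenspace `H_r = Ker(A - r)` is finite-dimensional. If a linear operator `T`
maps the ellipsoid `E = {x | ⟨x, Ax⟩ ≤ 1}` bijectively onto itself and is non-expansive
on `E`, then `T(H_r) = H_r`, `T(H_r ∩ E) = H_r ∩ E`, and `T` restricted to `H_r` is a
bijective isometry. -/
theorem min_eigenspace_invariant
    {𝕜 H : Type*} [RCLike 𝕜] [NormedAddCommGroup H] [InnerProductSpace 𝕜 H]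
    [CompleteSpace H] [TopologicalSpace.SeparableSpace H]
    (hinf : ¬ FiniteDimensional 𝕜 H)
    (A : H →L[𝕜] H) (hA : IsSelfAdjoint A)
    (hpos : ∃ c : ℝ, 0 < c ∧ ∀ x : H, ‖x‖ = 1 → c ≤ RCLike.re (inner 𝕜 (A x) x : 𝕜))
    (hdense : (⨆ μ : 𝕜, Module.End.eigenspace (A : H →ₗ[𝕜] H) μ).topologicalClosure = ⊤)
    (r : ℝ)
    (hr : Module.End.HasEigenvalue (A : H →ₗ[𝕜] H) (r : 𝕜))
    (hrmin : ∀ μ : ℝ, Module.End.HasEigenvalue (A : H →ₗ[𝕜] H) (μ : 𝕜) → r ≤ μ)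
    (hfd : FiniteDimensional 𝕜 (Module.End.eigenspace (A : H →ₗ[𝕜] H) (r : 𝕜)))
    (T : H →ₗ[𝕜] H)
    (hTbij : Set.BijOn T {x : H | RCLike.re (inner 𝕜 x (A x) : 𝕜) ≤ 1}
      {x : H | RCLike.re (inner 𝕜 x (A x) : 𝕜) ≤ 1})
    (hTne : ∀ x ∈ {x : H | RCLike.re (inner 𝕜 x (A x) : 𝕜) ≤ 1},
      ∀ y ∈ {x : H | RCLike.re (inner 𝕜 x (A x) : 𝕜) ≤ 1}, ‖T x - T y‖ ≤ ‖x - y‖) :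
    T '' (Module.End.eigenspace (A : H →ₗ[𝕜] H) (r : 𝕜) : Set H)
      = (Module.End.eigenspace (A : H →ₗ[𝕜] H) (r : 𝕜) : Set H) ∧
    T '' ((Module.End.eigenspace (A : H →ₗ[𝕜] H) (r : 𝕜) : Set H)
        ∩ {x : H | RCLike.re (inner 𝕜 x (A x) : 𝕜) ≤ 1})
      = (Module.End.eigenspace (A : H →ₗ[𝕜] H) (r : 𝕜) : Set H)
        ∩ {x : H | RCLike.re (inner 𝕜 x (A x) : 𝕜) ≤ 1} ∧
    Set.BijOn T (Module.End.eigenspace (A : H →ₗ[𝕜] H) (r : 𝕜) : Set H)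
      (Module.End.eigenspace (A : H →ₗ[𝕜] H) (r : 𝕜) : Set H) ∧
    ∀ x ∈ (Module.End.eigenspace (A : H →ₗ[𝕜] H) (r : 𝕜) : Set H),
      ∀ y ∈ (Module.End.eigenspace (A : H →ₗ[𝕜] H) (r : 𝕜) : Set H),
        ‖T x - T y‖ = ‖x - y‖ :=
  min_eigenspace_invariant_general A hA hpos hdense r hr hrmin hfd T hTbij hTne
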